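/- arXiv:1509.04237 — 2 statements merged into one kernel-verified Lean document; each statement's English description precedes it below -/
import Mathlib

section
/- For a real number α with 1 < α < 2, the Grünwald–Letnikov weights ω_j^{(α)} = (-1)^j C(α,j) satisfy: (1) ω_0^{(α)} = 1 and ω_1^{(α)} = -α < 0; (2) 1 ≥ ω_2^{(α)} ≥ ω_3^{(α)} ≥ ⋯ ≥ 0, i.e. the sequence (ω_j^{(α)})_{j≥2} is nonincreasing, bounded above by 1, and nonnegative. -/
/-!
Consecutive weights satisfy `ω_{j+1} = ω_j (j - α) / (j + 1)`. Once `j ≥ α` the factor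
`(j - α) / (j + 1)` lies in `[0, 1]` (the upper bound only needs `α ≥ -1`), so from any index
`n ≥ α` with `ω_n ≥ 0` on the weights stay nonnegative and decrease. For `1 < α < 2` this
applies from `n = 2`, where `ω_2 = α (α - 1) / 2 ∈ (0, 1)`.
-/

/-- The Grünwald–Letnikov weight `ω_j^{(α)} = (-1)^j C(α, j)` with the
generalized binomial coefficient `C(α, j) = α(α-1)⋯(α-j+1)/j!`. -/
noncomputable def glWeight (α : ℝ) (j : ℕ) : ℝ :=
  (-1) ^ j * ((∏ i ∈ Finset.range j, (α - i)) / (Nat.factorial j))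

section

variable {α : ℝ}

lemma glWeight_zero (α : ℝ) : glWeight α 0 = 1 := by
  simp [glWeight]

lemma glWeight_one (α : ℝ) : glWeight α 1 = -α := by
  simp [glWeight]

lemma glWeight_two (α : ℝ) : glWeight α 2 = α * (α - 1) / 2 := by
  simp [glWeight, Finset.prod_range_succ]

lemma glWeight_succ (α : ℝ) (j : ℕ) :
    glWeight α (j + 1) = glWeight α j * ((j - α) / (j + 1)) := by
  have hfact : (j.factorial : ℝ) ≠ 0 := by exact_mod_cast j.factorial_ne_zero
  unfold glWeight
  rw [Finset.prod_range_succ, Nat.factorial_succ, pow_succ]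
  push_cast
  field_simp
  ring

lemma glWeight_succ_nonneg {j : ℕ} (hj : α ≤ j) (hw : 0 ≤ glWeight α j) :
    0 ≤ glWeight α (j + 1) := by
  rw [glWeight_succ]
  exact mul_nonneg hw (div_nonneg (by linarith) (by positivity))

lemma glWeight_succ_le {j : ℕ} (hα : -1 ≤ α) (hw : 0 ≤ glWeight α j) :
    glWeight α (j + 1) ≤ glWeight α j := by
  have hratio : ((j : ℝ) - α) / (j + 1) ≤ 1 := by
    rw [div_le_one (by positivity)]
    linarith
  rw [glWeight_succ]
  exact mul_le_of_le_one_right hw hratio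

lemma glWeight_nonneg_of_le {n j : ℕ} (hn : α ≤ n) (hw : 0 ≤ glWeight α n) (hj : n ≤ j) :
    0 ≤ glWeight α j := by
  induction j, hj using Nat.le_induction with
  | base => exact hw
  | succ k hk ih => exact glWeight_succ_nonneg (hn.trans (by exact_mod_cast hk)) ih

lemma glWeight_antitoneOn {n : ℕ} (hα : -1 ≤ α) (hn : α ≤ n) (hw : 0 ≤ glWeight α n) :
    AntitoneOn (glWeight α) (Set.Ici n) :=
  antitoneOn_nat_Ici_of_succ_le fun _ hj ↦ glWeight_succ_le hα (glWeight_nonneg_of_le hn hw hj)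

end

/-- For `1 < α < 2`: `ω_0 = 1`, `ω_1 = -α < 0`, and the sequence
`(ω_j)_{j ≥ 2}` is bounded above by `1`, nonnegative, and nonincreasing. -/
theorem glWeight_properties (α : ℝ) (hα1 : 1 < α) (hα2 : α < 2) :
    glWeight α 0 = 1 ∧
    glWeight α 1 = -α ∧ glWeight α 1 < 0 ∧
    (∀ j : ℕ, 2 ≤ j → glWeight α j ≤ 1) ∧
    (∀ j : ℕ, 2 ≤ j → 0 ≤ glWeight α j) ∧
    (∀ j : ℕ, 2 ≤ j → glWeight α (j + 1) ≤ glWeight α j) := by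
  have hα : α ≤ (2 : ℕ) := by push_cast; exact hα2.le
  have hw2_nonneg : 0 ≤ glWeight α 2 := by
    rw [glWeight_two]
    have : 0 ≤ α - 1 := by linarith
    positivity
  have hw2_le_one : glWeight α 2 ≤ 1 := by
    rw [glWeight_two]
    nlinarith
  have hanti := glWeight_antitoneOn (by linarith) hα hw2_nonneg
  have hnonneg (j : ℕ) (hj : 2 ≤ j) : 0 ≤ glWeight α j := glWeight_nonneg_of_le hα hw2_nonneg hj
  refine ⟨glWeight_zero α, glWeight_one α, by rw [glWeight_one]; linarith,
    fun j hj ↦ ?_, hnonneg, fun j hj ↦ glWeight_succ_le (by linarith) (hnonneg j hj)⟩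
  exact (hanti (Set.mem_Ici.2 le_rfl) hj hj).trans hw2_le_one
end

section
/- For a real number α with 1 < α < 2 and the Grünwald–Letnikov weights ω_j^{(α)} = (-1)^j C(α,j), every partial sum satisfies ∑_{k=0}^{m} ω_k^{(α)} ≤ 0 for all integers m ≥ 1, and the full series satisfies ∑_{k=0}^{∞} ω_k^{(α)} = 0. -/
open Filter Finset Topology

theorem hasSum_of_tendsto_sum_range_of_nonneg_of_le {f : ℕ → ℝ} {a : ℝ} (k : ℕ)
    (hf : ∀ n, k ≤ n → 0 ≤ f n) (h : Tendsto (fun n ↦ ∑ i ∈ range n, f i) atTop (𝓝 a)) :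
    HasSum f a := by
  obtain ⟨B, hB⟩ := h.bddAbove_range
  have htail : Summable (fun n ↦ f (k + n)) := by
    refine summable_of_sum_range_le (c := B - ∑ i ∈ range k, f i)
      (fun n ↦ hf _ (Nat.le_add_right k n)) fun n ↦ ?_
    have hle : ∑ i ∈ range (k + n), f i ≤ B := hB ⟨k + n, rfl⟩
    rw [sum_range_add] at hle
    linarith
  have hs : Summable f := (summable_nat_add_iff k).mp (by simpa only [add_comm] using htail)
  exact hs.hasSum_iff_tendsto_nat.mpr h

namespace glWeight

theorem one (α : ℝ) : glWeight α 1 = -α := by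
  simp [glWeight]

theorem succ (α : ℝ) (m : ℕ) :
    glWeight α (m + 1) = glWeight α m * ((m - α) / (m + 1)) := by
  unfold glWeight
  rw [prod_range_succ, Nat.factorial_succ, pow_succ]
  push_cast
  field_simp
  ring

theorem sum_range_succ (α : ℝ) (m : ℕ) :
    ∑ k ∈ range (m + 1), glWeight α k = glWeight (α - 1) m := by
  induction m with
  | zero => simp [glWeight]
  | succ m ih =>
    rw [Finset.sum_range_succ, ih]
    have hshift : ∏ i ∈ range (m + 1), (α - i) = α * ∏ i ∈ range m, (α - 1 - i) := by
      rw [prod_range_succ', mul_comm]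
      congr 1
      · simp
      · exact prod_congr rfl fun i _ ↦ by push_cast; ring
    unfold glWeight
    rw [hshift, prod_range_succ, Nat.factorial_succ, pow_succ]
    push_cast
    field_simp
    ring

theorem nonpos {β : ℝ} (hβ0 : 0 ≤ β) (hβ1 : β ≤ 1) {m : ℕ} (hm : 1 ≤ m) :
    glWeight β m ≤ 0 := by
  induction m, hm using Nat.le_induction with
  | base => rw [one]; linarith
  | succ m hm ih =>
    have hm' : (1 : ℝ) ≤ m := by exact_mod_cast hm
    rw [succ]
    exact mul_nonpos_of_nonpos_of_nonneg ih (div_nonneg (by linarith) (by linarith))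

theorem abs_le_inv {β : ℝ} (hβ0 : 0 ≤ β) (hβ1 : β ≤ 1) {m : ℕ} (hm : 1 ≤ m) :
    |glWeight β m| ≤ (m : ℝ)⁻¹ := by
  induction m, hm using Nat.le_induction with
  | base => rw [one, abs_neg, abs_of_nonneg hβ0]; simpa using hβ1
  | succ m hm ih =>
    have hm' : (1 : ℝ) ≤ m := by exact_mod_cast hm
    have hratio : |((m : ℝ) - β) / (m + 1)| = (m - β) / (m + 1) :=
      abs_of_nonneg (div_nonneg (by linarith) (by linarith))
    calc |glWeight β (m + 1)| = |glWeight β m| * ((m - β) / (m + 1)) := by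
          rw [succ, abs_mul, hratio]
      _ ≤ (m : ℝ)⁻¹ * ((m - β) / (m + 1)) := by
          gcongr
          exact div_nonneg (by linarith) (by linarith)
      _ ≤ ((m + 1 : ℕ) : ℝ)⁻¹ := by
          push_cast
          rw [inv_mul_le_iff₀ (by linarith), div_le_iff₀ (by linarith)]
          field_simp
          linarith

theorem tendsto_zero {β : ℝ} (hβ0 : 0 ≤ β) (hβ1 : β ≤ 1) :
    Tendsto (glWeight β) atTop (𝓝 0) :=
  squeeze_zero_norm' (eventually_atTop.mpr ⟨1, fun _ hm ↦ abs_le_inv hβ0 hβ1 hm⟩)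
    tendsto_inv_atTop_nhds_zero_nat

theorem nonneg {α : ℝ} (hα1 : 1 ≤ α) (hα2 : α ≤ 2) {k : ℕ} (hk : 2 ≤ k) :
    0 ≤ glWeight α k := by
  induction k, hk using Nat.le_induction with
  | base =>
    rw [succ, one]
    push_cast
    exact mul_nonneg_of_nonpos_of_nonpos (by linarith)
      (div_nonpos_of_nonpos_of_nonneg (by linarith) (by norm_num))
  | succ k hk ih =>
    have hk' : (2 : ℝ) ≤ k := by exact_mod_cast hk
    rw [succ]
    exact mul_nonneg ih (div_nonneg (by linarith) (by linarith))

end glWeight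

/-- For `1 < α < 2`, every partial sum `∑_{k=0}^m ω_k^{(α)}` with
`m ≥ 1` is `≤ 0`, and the full series sums to `0`. -/
theorem glWeight_sums (α : ℝ) (hα1 : 1 < α) (hα2 : α < 2) :
    (∀ m : ℕ, 1 ≤ m → ∑ k ∈ Finset.range (m + 1), glWeight α k ≤ 0) ∧
    HasSum (glWeight α) 0 := by
  have hβ0 : 0 ≤ α - 1 := by linarith
  have hβ1 : α - 1 ≤ 1 := by linarith
  refine ⟨fun m hm ↦ ?_, ?_⟩
  · rw [glWeight.sum_range_succ]
    exact glWeight.nonpos hβ0 hβ1 hm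
  · refine hasSum_of_tendsto_sum_range_of_nonneg_of_le 2
      (fun k hk ↦ glWeight.nonneg hα1.le hα2.le hk) ?_
    have hpartial : Tendsto (fun m ↦ ∑ k ∈ range (m + 1), glWeight α k) atTop (𝓝 0) := by
      simpa only [glWeight.sum_range_succ] using glWeight.tendsto_zero hβ0 hβ1
    exact (tendsto_add_atTop_iff_nat 1).mp hpartial
end
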